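/- (Theorem 3.11, a sufficient condition for Hamiltonization, Euclidean case Q̄ = ℝ^n.) Suppose the smooth vector field X on ℝ^n × ℝ^n satisfies the reduced Chaplygin equations i_X(Ω − Ξ) = dH, where Ξ is a fiber-linear semibasic two-form, and suppose f: ℝ^n → ℝ is smooth, nowhere-vanishing, and satisfies df ∧ Θ = f·Ξ, i.e. (df ∧ Θ)_z(u,v) = f(q)·Ξ_z(u,v) for all z = (q,p) and all u, v. Then the Chaplygin-rescaled vector field X_C satisfies Hamilton's equations Ω(X_C(z), v) = DH_C(z)[v] for all z and v, where H_C is the Chaplygin Hamiltonian; and consequently div(f^{n−1}X) = 0 identically, i.e. X preserves the measure f(q)^{n−1} dq dp. -/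

import Mathlib

noncomputable section

open Matrix

/-- Configuration vectors: points of `ℝⁿ`. -/
abbrev Vec (n : ℕ) : Type := Fin n → ℝ

/-- Phase space `ℝⁿ × ℝⁿ`, points `z = (q, p)`. -/
abbrev Phase (n : ℕ) : Type := Vec n × Vec n

/-- Canonical symplectic form `Ω(u,v) = ⟨u_q, v_p⟩ − ⟨u_p, v_q⟩`. -/
def Omega {n : ℕ} (u v : Phase n) : ℝ := u.1 ⬝ᵥ v.2 - u.2 ⬝ᵥ v.1

/-- Liouville one-form `Θ_z(v) = ⟨p, v_q⟩` at `z = (q,p)`. -/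
def Theta {n : ℕ} (z v : Phase n) : ℝ := z.2 ⬝ᵥ v.1

/-- Fiber scaling `Ψ_f(q,p) = (q, f(q)·p)`. -/
def Psi {n : ℕ} (f : Vec n → ℝ) (z : Phase n) : Phase n := (z.1, f z.1 • z.2)

/-- `Ψ_{1/f}`, the inverse of `Ψ_f`. -/
def PsiInv {n : ℕ} (f : Vec n → ℝ) : Phase n → Phase n := Psi fun q => (f q)⁻¹

/-- The Chaplygin-rescaled vector field
`X_C(z) := DΨ_f(Ψ_{1/f}(z))[(1/f(q))·X(Ψ_{1/f}(z))]`. -/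
def ChapRescale {n : ℕ} (f : Vec n → ℝ) (X : Phase n → Phase n) (z : Phase n) : Phase n :=
  fderiv ℝ (Psi f) (PsiInv f z) ((f z.1)⁻¹ • X (PsiInv f z))

/-- The two-form `df ∧ Θ`. -/
def dfTheta {n : ℕ} (f : Vec n → ℝ) (z u v : Phase n) : ℝ :=
  fderiv ℝ f z.1 u.1 * (z.2 ⬝ᵥ v.1) - fderiv ℝ f z.1 v.1 * (z.2 ⬝ᵥ u.1)

/-- Divergence of a vector field: `div Y (z) = trace DY(z)`. -/
def divergence {n : ℕ} (Y : Phase n → Phase n) (z : Phase n) : ℝ :=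
  LinearMap.trace ℝ (Phase n) (fderiv ℝ Y z).toLinearMap

/-- A fiber-linear semibasic two-form on phase space: a smooth assignment
`z ↦ Ξ_z` of alternating bilinear forms whose value depends only on the base
components of its arguments, and which is linear in the fiber variable `p`. -/
structure FiberLinearSemibasicTwoForm (n : ℕ) where
  form : Phase n → Phase n → Phase n → ℝ
  smooth : ∀ u v : Phase n, ContDiff ℝ (⊤ : ℕ∞) fun z => form z u v
  alt : ∀ z u v : Phase n, form z u v = - form z v u
  add_left : ∀ (z u u' v : Phase n), form z (u + u') v = form z u v + form z u' v
  smul_left : ∀ (z : Phase n) (c : ℝ) (u v : Phase n), form z (c • u) v = c * form z u v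
  semibasic : ∀ (z u v u' v' : Phase n), u.1 = u'.1 → v.1 = v'.1 → form z u v = form z u' v'
  fiber_add : ∀ (q p p' : Vec n) (u v : Phase n),
    form (q, p + p') u v = form (q, p) u v + form (q, p') u v
  fiber_smul : ∀ (q : Vec n) (c : ℝ) (p : Vec n) (u v : Phase n),
    form (q, c • p) u v = c * form (q, p) u v

/-!
Since `df ∧ Θ = f Ξ`, the form `Ξ` is determined by `f`, and the Chaplygin equations can be
solved for `X`: it is the Hamiltonian field `X_H = (∂H/∂p, -∂H/∂q)` plus the momentum
correction `W = (0, -(1/f) (df(∂H/∂p) p - ⟨p, ∂H/∂p⟩ ∇f))`.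

Hamiltonization is a pointwise computation: the `df`-terms of `DΨ_f` in `X_C` and of `DΨ_{1/f}`
in `dH_C` reproduce exactly the two terms of `Ξ = (df ∧ Θ) / f`.

For the measure, `div X_H = 0` by symmetry of the Hessian of `H`, and the symmetry of `∂²H/∂p²`
also gives `div W = -(n - 1) df(X_q) / f`. This is cancelled by the derivative
`(n - 1) f^(n-2) df(X_q)` of the density `f^(n-1)` along `X`.
-/

theorem ContDiffAt.differentiableAt_fderiv {𝕜 E F : Type*} [NontriviallyNormedField 𝕜]
    [NormedAddCommGroup E] [NormedSpace 𝕜 E] [NormedAddCommGroup F] [NormedSpace 𝕜 F]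
    {g : E → F} {x : E} (hg : ContDiffAt 𝕜 2 g x) : DifferentiableAt 𝕜 (fderiv 𝕜 g) x :=
  (hg.fderiv_right (m := 1) le_rfl).differentiableAt one_ne_zero

theorem map_eq_sum_mul_single {ι : Type*} [Fintype ι] [DecidableEq ι]
    (L : (ι → ℝ) →L[ℝ] ℝ) (v : ι → ℝ) : L v = ∑ j, v j * L (Pi.single j 1) := by
  calc L v = L (∑ j, v j • Pi.single j 1) := by
        congr 1; ext k; simp [Pi.single_apply]
    _ = ∑ j, v j * L (Pi.single j 1) := by simp

theorem hasFDerivAt_dotProduct {E ι : Type*} [NormedAddCommGroup E] [NormedSpace ℝ E]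
    [Fintype ι] {u v : E → ι → ℝ} {u' v' : E →L[ℝ] ι → ℝ} {x : E}
    (hu : HasFDerivAt u u' x) (hv : HasFDerivAt v v' x) :
    HasFDerivAt (fun y => u y ⬝ᵥ v y)
      (∑ j, (u x j • (ContinuousLinearMap.proj j).comp v'
        + v x j • (ContinuousLinearMap.proj j).comp u')) x :=
  HasFDerivAt.fun_sum fun j _ => (hasFDerivAt_pi'.1 hu j).fun_mul (hasFDerivAt_pi'.1 hv j)

section PhaseSpace

variable {n : ℕ} {f : Vec n → ℝ} {X : Phase n → Phase n} {H : Phase n → ℝ} {z : Phase n}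

theorem divergence_eq_sum (Y : Phase n → Phase n) (z : Phase n) :
    divergence Y z = ∑ i, ((fderiv ℝ Y z (Pi.single i 1, 0)).1 i
      + (fderiv ℝ Y z (0, Pi.single i 1)).2 i) := by
  rw [divergence, LinearMap.trace_eq_matrix_trace ℝ
    ((Pi.basisFun ℝ (Fin n)).prod (Pi.basisFun ℝ (Fin n))), Matrix.trace]
  simp [Fintype.sum_sum_type, LinearMap.toMatrix_apply, Finset.sum_add_distrib]

theorem divergence_add {Y Z : Phase n → Phase n}
    (hY : DifferentiableAt ℝ Y z) (hZ : DifferentiableAt ℝ Z z) :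
    divergence (fun w => Y w + Z w) z = divergence Y z + divergence Z z := by
  simp only [divergence, fderiv_fun_add hY hZ, ContinuousLinearMap.toLinearMap_add, map_add]

theorem divergence_smul {g : Phase n → ℝ} {Y : Phase n → Phase n}
    (hg : DifferentiableAt ℝ g z) (hY : DifferentiableAt ℝ Y z) :
    divergence (fun w => g w • Y w) z = g z * divergence Y z + fderiv ℝ g z (Y z) := by
  simp [divergence, fderiv_fun_smul hg hY]

theorem hasFDerivAt_Psi {g : Vec n → ℝ} {g' : Vec n →L[ℝ] ℝ} {w : Phase n}
    (hg : HasFDerivAt g g' w.1) :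
    HasFDerivAt (Psi g)
      ((ContinuousLinearMap.fst ℝ (Vec n) (Vec n)).prod
        (g w.1 • ContinuousLinearMap.snd ℝ (Vec n) (Vec n) +
          (g'.comp (ContinuousLinearMap.fst ℝ (Vec n) (Vec n))).smulRight w.2)) w :=
  hasFDerivAt_fst.prodMk ((hg.comp w hasFDerivAt_fst).smul hasFDerivAt_snd)

theorem chapRescale_apply {q : Vec n} (hf : DifferentiableAt ℝ f q) (hf0 : f q ≠ 0)
    (X : Phase n → Phase n) (p : Vec n) :
    ChapRescale f X (q, p) = ((f q)⁻¹ • (X (PsiInv f (q, p))).1,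
      (X (PsiInv f (q, p))).2 + ((f q ^ 2)⁻¹ * fderiv ℝ f q (X (PsiInv f (q, p))).1) • p) := by
  rw [ChapRescale, (hasFDerivAt_Psi (w := PsiInv f (q, p)) hf.hasFDerivAt).fderiv]
  ext i <;> simp [PsiInv, Psi, hf0, pow_two, mul_assoc, mul_left_comm]

theorem fderiv_comp_psiInv {q p : Vec n} (hf : DifferentiableAt ℝ f q) (hf0 : f q ≠ 0)
    (hH : DifferentiableAt ℝ H (PsiInv f (q, p))) (v : Phase n) :
    fderiv ℝ (fun w => H (PsiInv f w)) (q, p) v = fderiv ℝ H (PsiInv f (q, p))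
      (v.1, (f q)⁻¹ • v.2 - ((f q ^ 2)⁻¹ * fderiv ℝ f q v.1) • p) := by
  have hinv : HasFDerivAt (fun q => (f q)⁻¹) _ q :=
    (hasDerivAt_inv hf0).comp_hasFDerivAt q hf.hasFDerivAt
  have h : HasFDerivAt (fun w => H (PsiInv f w)) _ (q, p) :=
    hH.hasFDerivAt.comp (q, p) (hasFDerivAt_Psi (w := (q, p)) hinv)
  simp [h.fderiv, sub_eq_add_neg]

/-- The reduced Chaplygin equations `i_X(Ω - Ξ) = dH` with `Ξ = (df ∧ Θ) / f`. -/
def IsChaplyginField (f : Vec n → ℝ) (H : Phase n → ℝ) (X : Phase n → Phase n) : Prop :=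
  ∀ z v, Omega (X z) v - (f z.1)⁻¹ * dfTheta f z (X z) v = fderiv ℝ H z v

theorem IsChaplyginField.omega_chapRescale (hX : IsChaplyginField f H X)
    (hf : DifferentiableAt ℝ f z.1) (hf0 : f z.1 ≠ 0) (hH : DifferentiableAt ℝ H (PsiInv f z))
    (v : Phase n) :
    Omega (ChapRescale f X z) v = fderiv ℝ (fun w => H (PsiInv f w)) z v := by
  obtain ⟨q, p⟩ := z
  rw [chapRescale_apply hf hf0, fderiv_comp_psiInv hf hf0 hH, ← hX]
  simp only [Omega, dfTheta, PsiInv, Psi, dotProduct_comm p, add_dotProduct, dotProduct_sub,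
    smul_dotProduct, dotProduct_smul, smul_eq_mul]
  field_simp
  ring

def hamiltonianField (H : Phase n → ℝ) (z : Phase n) : Phase n :=
  (fun i => fderiv ℝ H z (0, Pi.single i 1), fun i => -fderiv ℝ H z (Pi.single i 1, 0))

theorem hasFDerivAt_fderiv_apply (hH : ContDiffAt ℝ 2 H z) (v : Phase n) :
    HasFDerivAt (fun w => fderiv ℝ H w v) ((fderiv ℝ (fderiv ℝ H) z).flip v) z := by
  simpa using hH.differentiableAt_fderiv.hasFDerivAt.clm_apply (hasFDerivAt_const v z)

theorem hasFDerivAt_hamiltonianField (hH : ContDiffAt ℝ 2 H z) :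
    HasFDerivAt (hamiltonianField H)
      ((ContinuousLinearMap.pi fun i => (fderiv ℝ (fderiv ℝ H) z).flip (0, Pi.single i 1)).prod
        (ContinuousLinearMap.pi fun i => -(fderiv ℝ (fderiv ℝ H) z).flip (Pi.single i 1, 0))) z :=
  (hasFDerivAt_pi.2 fun _ => hasFDerivAt_fderiv_apply hH _).prodMk
    (hasFDerivAt_pi.2 fun _ => (hasFDerivAt_fderiv_apply hH _).neg)

theorem divergence_hamiltonianField (hH : ContDiffAt ℝ 2 H z) :
    divergence (hamiltonianField H) z = 0 := by
  rw [divergence_eq_sum, (hasFDerivAt_hamiltonianField hH).fderiv]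
  refine Finset.sum_eq_zero fun i _ => ?_
  simp [hH.isSymmSndFDerivAt (by simp) (Pi.single i 1, 0)]

/-- The field `W` with `Ω(W, ·) = Ξ(X, ·)`, where `V` stands for the velocity `X_q`. -/
def chaplyginCorrection (f : Vec n → ℝ) (V : Phase n → Vec n) (z : Phase n) : Phase n :=
  (0, -(f z.1)⁻¹ • (fderiv ℝ f z.1 (V z) • z.2
    - (z.2 ⬝ᵥ V z) • fun j => fderiv ℝ f z.1 (Pi.single j 1)))

theorem hasFDerivAt_chaplyginCorrection {V : Phase n → Vec n} (hf : ContDiffAt ℝ 2 f z.1)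
    (hf0 : f z.1 ≠ 0) (hV : DifferentiableAt ℝ V z) :
    ∃ L : Phase n →L[ℝ] Vec n,
      HasFDerivAt (chaplyginCorrection f V) ((0 : Phase n →L[ℝ] Vec n).prod L) z ∧
      ∀ δ, L (0, δ) = -(f z.1)⁻¹ • (fderiv ℝ f z.1 (fderiv ℝ V z (0, δ)) • z.2
        + fderiv ℝ f z.1 (V z) • δ
        - (δ ⬝ᵥ V z + z.2 ⬝ᵥ fderiv ℝ V z (0, δ)) • fun j => fderiv ℝ f z.1 (Pi.single j 1)) := by
  have hq : HasFDerivAt (fun w : Phase n => w.1) (ContinuousLinearMap.fst ℝ (Vec n) (Vec n)) z :=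
    hasFDerivAt_fst
  have hp : HasFDerivAt (fun w : Phase n => w.2) (ContinuousLinearMap.snd ℝ (Vec n) (Vec n)) z :=
    hasFDerivAt_snd
  have hinv := (hasDerivAt_inv hf0).comp_hasFDerivAt z
    ((hf.differentiableAt two_ne_zero).hasFDerivAt.comp z hq)
  have hdf := hf.differentiableAt_fderiv.hasFDerivAt.comp z hq
  have hgrad : HasFDerivAt (fun w : Phase n => fun j => fderiv ℝ f w.1 (Pi.single j 1)) _ z :=
    hasFDerivAt_pi.2 fun j => hdf.clm_apply (hasFDerivAt_const (Pi.single j 1 : Vec n) z)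
  have hW := hinv.neg.smul (((hdf.clm_apply hV.hasFDerivAt).smul hp).sub
    ((hasFDerivAt_dotProduct hp hV.hasFDerivAt).smul hgrad))
  refine ⟨_, (hasFDerivAt_const (0 : Vec n) z).prodMk hW, fun δ => ?_⟩
  simp [dotProduct, Finset.sum_add_distrib, mul_comm, add_comm, ← Pi.zero_def]

theorem divergence_chaplyginCorrection {V : Phase n → Vec n} (hf : ContDiffAt ℝ 2 f z.1)
    (hf0 : f z.1 ≠ 0) (hV : DifferentiableAt ℝ V z)
    (hsymm : ∀ i j, fderiv ℝ V z (0, Pi.single i 1) j = fderiv ℝ V z (0, Pi.single j 1) i) :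
    divergence (chaplyginCorrection f V) z
      = -((n : ℝ) - 1) * (f z.1)⁻¹ * fderiv ℝ f z.1 (V z) := by
  obtain ⟨L, hL, hL0⟩ := hasFDerivAt_chaplyginCorrection hf hf0 hV
  rw [divergence_eq_sum, hL.fderiv]
  have hgrad : ∑ i, V z i * fderiv ℝ f z.1 (Pi.single i 1) = fderiv ℝ f z.1 (V z) :=
    (map_eq_sum_mul_single _ _).symm
  have hswap : ∑ i, fderiv ℝ f z.1 (fderiv ℝ V z (0, Pi.single i 1)) * z.2 i
      = ∑ i, (z.2 ⬝ᵥ fderiv ℝ V z (0, Pi.single i 1)) * fderiv ℝ f z.1 (Pi.single i 1) := by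
    simp only [map_eq_sum_mul_single (fderiv ℝ f z.1) (fderiv ℝ V z _), dotProduct,
      Finset.sum_mul]
    rw [Finset.sum_comm]
    refine Finset.sum_congr rfl fun i _ => Finset.sum_congr rfl fun j _ => ?_
    rw [hsymm]
    ring
  simp only [hL0, ContinuousLinearMap.prod_apply, _root_.zero_apply, Pi.zero_apply, zero_add,
    Pi.smul_apply, Pi.sub_apply, Pi.add_apply, smul_eq_mul, Pi.single_eq_same, single_dotProduct,
    one_mul, mul_one]
  rw [← Finset.mul_sum]
  simp only [Finset.sum_sub_distrib, Finset.sum_add_distrib, add_mul, Finset.sum_const,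
    Finset.card_univ, Fintype.card_fin, nsmul_eq_mul, hgrad, hswap]
  ring

theorem IsChaplyginField.eq_hamiltonianField_add (hX : IsChaplyginField f H X) (z : Phase n) :
    X z = hamiltonianField H z + chaplyginCorrection f (fun w => (hamiltonianField H w).1) z := by
  have hq : (X z).1 = (hamiltonianField H z).1 := by
    ext i
    simpa [Omega, dfTheta, hamiltonianField] using hX z (0, Pi.single i 1)
  refine Prod.ext (by simpa [chaplyginCorrection] using hq) (funext fun i => ?_)
  have hp := hX z (Pi.single i 1, 0)
  simp only [Omega, dfTheta, dotProduct_zero, dotProduct_single, mul_one, zero_sub] at hp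
  simp only [Prod.snd_add, Pi.add_apply, chaplyginCorrection, ← hq]
  simp only [hamiltonianField, ← hp, Pi.smul_apply, Pi.sub_apply, smul_eq_mul]
  ring

theorem IsChaplyginField.differentiableAt (hX : IsChaplyginField f H X)
    (hH : ContDiffAt ℝ 2 H z) (hf : ContDiffAt ℝ 2 f z.1) (hf0 : f z.1 ≠ 0) :
    DifferentiableAt ℝ X z := by
  rw [funext hX.eq_hamiltonianField_add]
  exact (hasFDerivAt_hamiltonianField hH).differentiableAt.add
    (hasFDerivAt_chaplyginCorrection hf hf0
      (hasFDerivAt_hamiltonianField hH).differentiableAt.fst).choose_spec.1.differentiableAt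

theorem IsChaplyginField.divergence_eq (hX : IsChaplyginField f H X)
    (hH : ContDiffAt ℝ 2 H z) (hf : ContDiffAt ℝ 2 f z.1) (hf0 : f z.1 ≠ 0) :
    divergence X z = -((n : ℝ) - 1) * (f z.1)⁻¹ * fderiv ℝ f z.1 (X z).1 := by
  set V := fun w => (hamiltonianField H w).1
  have hV : HasFDerivAt V
      (ContinuousLinearMap.pi fun i => (fderiv ℝ (fderiv ℝ H) z).flip (0, Pi.single i 1)) z :=
    hasFDerivAt_pi.2 fun _ => hasFDerivAt_fderiv_apply hH _
  have hsymm : ∀ i j, fderiv ℝ V z (0, Pi.single i 1) j = fderiv ℝ V z (0, Pi.single j 1) i := by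
    intro i j
    simp [hV.fderiv, hH.isSymmSndFDerivAt (by simp) (0, Pi.single i 1)]
  obtain ⟨L, hL, -⟩ := hasFDerivAt_chaplyginCorrection hf hf0 hV.differentiableAt
  rw [funext hX.eq_hamiltonianField_add, divergence_add
    (hasFDerivAt_hamiltonianField hH).differentiableAt hL.differentiableAt,
    divergence_hamiltonianField hH, divergence_chaplyginCorrection hf hf0 hV.differentiableAt hsymm]
  simp [chaplyginCorrection, V]

theorem IsChaplyginField.divergence_pow_smul_eq_zero (hX : IsChaplyginField f H X) (hn : 1 ≤ n)
    (hH : ContDiffAt ℝ 2 H z) (hf : ContDiffAt ℝ 2 f z.1) (hf0 : f z.1 ≠ 0) :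
    divergence (fun w => f w.1 ^ (n - 1) • X w) z = 0 := by
  have hg : HasFDerivAt (fun w : Phase n => f w.1 ^ (n - 1)) _ z :=
    (hasDerivAt_pow (n - 1) (f z.1)).comp_hasFDerivAt z
      ((hf.differentiableAt two_ne_zero).hasFDerivAt.comp z hasFDerivAt_fst)
  rw [divergence_smul hg.differentiableAt (hX.differentiableAt hH hf hf0),
    hX.divergence_eq hH hf hf0, hg.fderiv]
  obtain ⟨m, rfl⟩ := Nat.exists_eq_add_of_le' hn
  rcases m with _ | m
  · simp
  · simp only [add_tsub_cancel_right, Nat.cast_add, Nat.cast_one, _root_.smul_apply,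
      ContinuousLinearMap.comp_apply, ContinuousLinearMap.coe_fst', smul_eq_mul]
    field_simp
    ring

end PhaseSpace

theorem statement5_general (n : ℕ) (hn : 1 ≤ n) (X : Phase n → Phase n) (H : Phase n → ℝ)
    (Ξ : FiberLinearSemibasicTwoForm n) (f : Vec n → ℝ)
    (hH : ContDiff ℝ (⊤ : ℕ∞) H)
    (hf : ContDiff ℝ (⊤ : ℕ∞) f) (hf0 : ∀ q, f q ≠ 0)
    (heq : ∀ (z v : Phase n), Omega (X z) v - Ξ.form z (X z) v = fderiv ℝ H z v)
    (hsuff : ∀ (z u v : Phase n), dfTheta f z u v = f z.1 * Ξ.form z u v) :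
    (∀ (z v : Phase n),
        Omega (ChapRescale f X z) v = fderiv ℝ (fun w => H (PsiInv f w)) z v)
      ∧ (∀ z : Phase n, divergence (fun w => f w.1 ^ (n - 1) • X w) z = 0) := by
  have hX : IsChaplyginField f H X := fun z v => by
    rw [← heq, hsuff, inv_mul_cancel_left₀ (hf0 z.1)]
  have hH2 : ContDiff ℝ 2 H := hH.of_le (WithTop.coe_le_coe.2 le_top)
  have hf2 : ContDiff ℝ 2 f := hf.of_le (WithTop.coe_le_coe.2 le_top)
  exact ⟨fun z => hX.omega_chapRescale (hf2.differentiable two_ne_zero _) (hf0 _)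
      (hH2.differentiable two_ne_zero _),
    fun z => hX.divergence_pow_smul_eq_zero hn hH2.contDiffAt hf2.contDiffAt (hf0 _)⟩

theorem statement5 (n : ℕ) (hn : 1 ≤ n) (X : Phase n → Phase n) (H : Phase n → ℝ)
    (Ξ : FiberLinearSemibasicTwoForm n) (f : Vec n → ℝ)
    (hX : ContDiff ℝ (⊤ : ℕ∞) X) (hH : ContDiff ℝ (⊤ : ℕ∞) H)
    (hf : ContDiff ℝ (⊤ : ℕ∞) f) (hf0 : ∀ q, f q ≠ 0)
    (heq : ∀ (z v : Phase n), Omega (X z) v - Ξ.form z (X z) v = fderiv ℝ H z v)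
    (hsuff : ∀ (z u v : Phase n), dfTheta f z u v = f z.1 * Ξ.form z u v) :
    (∀ (z v : Phase n),
        Omega (ChapRescale f X z) v = fderiv ℝ (fun w => H (PsiInv f w)) z v)
      ∧ (∀ z : Phase n, divergence (fun w => f w.1 ^ (n - 1) • X w) z = 0) :=
  statement5_general n hn X H Ξ f hH hf hf0 heq hsuff
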